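/- Let n and d be integers with n ≥ 2d+2 and d ≥ 1, and let G = C_n(d+1, d+2, ..., ⌊n/2⌋) be the circulant graph with generating set {d+1, d+2, ..., ⌊n/2⌋}. Then G satisfies Serre's condition S_2 if and only if n > 3d or n = 2d+2. -/

import Mathlib

/-- The circulant graph `C_n(S)` on vertex set `ZMod n`: `i` and `j` are adjacent
iff `i ≠ j` and `|i-j| ∈ S` or `n - |i-j| ∈ S` (encoded via `ZMod` subtraction). -/
def circulantGraph (n : ℕ) (S : Set ℕ) : SimpleGraph (ZMod n) where
  Adj i j := i ≠ j ∧ ((i - j).val ∈ S ∨ (j - i).val ∈ S)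
  symm := ⟨fun i j h => ⟨h.1.symm, h.2.symm⟩⟩
  loopless := ⟨fun i h => h.1 rfl⟩

/-- An (abstract) simplicial complex on vertex type `V`, as a downward closed
family of finite subsets of `V`. -/
def IsComplex {V : Type*} (Δ : Set (Finset V)) : Prop :=
  ∀ F ∈ Δ, ∀ G ⊆ F, G ∈ Δ

/-- The link of a face `F` in the complex `Δ`. -/
def linkC {V : Type*} [DecidableEq V] (Δ : Set (Finset V)) (F : Finset V) : Set (Finset V) :=
  {G | Disjoint G F ∧ G ∪ F ∈ Δ}

/-- A complex is connected if any two of its vertices can be joined by a path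
of 1-dimensional faces. -/
def ComplexConnected {V : Type*} [DecidableEq V] (Δ : Set (Finset V)) : Prop :=
  ∀ u, ({u} : Finset V) ∈ Δ → ∀ w, ({w} : Finset V) ∈ Δ →
    Relation.ReflTransGen (fun a b => a ≠ b ∧ ({a, b} : Finset V) ∈ Δ) u w

/-- Serre's condition `S₂` for a simplicial complex: the link of every face of the
complex whose link has dimension at least `1` is connected. -/
def IsS2 {V : Type*} [DecidableEq V] (Δ : Set (Finset V)) : Prop :=
  ∀ F ∈ Δ, (∃ G ∈ linkC Δ F, 2 ≤ G.card) → ComplexConnected (linkC Δ F)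

/-- The independence complex of a graph: faces are the (finite) independent sets. -/
def IndComplex {V : Type*} (G : SimpleGraph V) : Set (Finset V) :=
  {F | ∀ u ∈ F, ∀ v ∈ F, ¬ G.Adj u v}

/-- A graph is `S₂` if its independence complex is `S₂`. -/
def GraphS2 {V : Type*} [DecidableEq V] (G : SimpleGraph V) : Prop :=
  IsS2 (IndComplex G)

/-- The facets (maximal faces) of a complex. -/
def facetsOf {V : Type*} (Δ : Set (Finset V)) : Set (Finset V) :=
  {F | F ∈ Δ ∧ ∀ G ∈ Δ, F ⊆ G → F = G}

/-- A graph is well-covered if all its maximal independent sets have the same cardinality. -/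
def WellCovered {V : Type*} (G : SimpleGraph V) : Prop :=
  ∀ A ∈ facetsOf (IndComplex G), ∀ B ∈ facetsOf (IndComplex G), A.card = B.card

/-- A complex is pure if all its facets have the same cardinality. -/
def IsPure {V : Type*} (Δ : Set (Finset V)) : Prop :=
  ∀ F ∈ facetsOf Δ, ∀ G ∈ facetsOf Δ, F.card = G.card

/-- `L` is a shelling order of `Δ`: a linear order `F₁, …, Fₛ` of all the facets of `Δ`
such that for all `i < j` there are `v ∈ Fⱼ \ Fᵢ` and `l < j` with `Fⱼ \ F_l = {v}`. -/
def IsShellingOrder {V : Type*} [DecidableEq V] (Δ : Set (Finset V)) (L : List (Finset V)) : Prop :=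
  L.Nodup ∧ (∀ F, F ∈ facetsOf Δ ↔ F ∈ L) ∧
    ∀ i j : Fin L.length, i < j →
      ∃ v ∈ L.get j \ L.get i, ∃ l : Fin L.length, l < j ∧ L.get j \ L.get l = {v}

/-- A complex is shellable if its facets admit a shelling order. -/
def IsShellable {V : Type*} [DecidableEq V] (Δ : Set (Finset V)) : Prop :=
  ∃ L : List (Finset V), IsShellingOrder Δ L

/-- A pure complex is strongly connected if any two facets are joined by a sequence of
facets in which consecutive facets intersect in one element fewer than their cardinality. -/
def StronglyConnectedComplex {V : Type*} [DecidableEq V] (Δ : Set (Finset V)) : Prop :=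
  ∀ F ∈ facetsOf Δ, ∀ F' ∈ facetsOf Δ,
    Relation.ReflTransGen
      (fun A B => A ∈ facetsOf Δ ∧ B ∈ facetsOf Δ ∧ (A ∩ B).card = A.card - 1) F F'

/-- The join of two simplicial complexes (on disjoint vertex sets). -/
def joinC {V : Type*} [DecidableEq V] (Δ₁ Δ₂ : Set (Finset V)) : Set (Finset V) :=
  {F | ∃ F₁ ∈ Δ₁, ∃ F₂ ∈ Δ₂, F = F₁ ∪ F₂}

/-- The generating set of the one-paired circulant graph `C(n; a, b)`. -/
def onePairedSet (n a b : ℕ) : Set ℕ :=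
  {d | 1 ≤ d ∧ d ≤ n / 2 ∧ a ∣ d ∧ ¬ (a * b ∣ d)}

/-!
Distinct vertices of `C_n(d+1, …, ⌊n/2⌋)` are adjacent exactly when their circular distance
exceeds `d`, so faces of the independence complex are sets of pairwise circular distance `≤ d`.

For `n = 2d+2` the graph is a perfect matching, and in the independence complex of a matching two
adjacent link vertices are joined through any third link vertex.

For `n > 3d`, a nonempty face `F` lies within distance `d` of a point `u₀ ∈ F`; measuring from
`u₀` identifies this neighbourhood with the integers in `[-d, d]`, and because `n > 3d` the
circular distance of two such points is the distance of their coordinates. The link of `F` becomes the set of integers outside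
`P = coordinates of F` within `d` of all of `P`, which is connected through a gap of `P` in
`[min P, max P]`, or else through `min P - 1` and `max P + 1`. The link of the empty face is
connected along the cycle `v, v + 1, …`.

For `2d+3 ≤ n ≤ 3d` and `k = 3d - n`, the link of `{0, …, k, d}` contains the edge
`{k+1, k+2}`, but the vertex `2d` is isolated in it.
-/

open Relation

section IndependenceComplex

variable {V : Type*} {G : SimpleGraph V}

theorem isComplex_indComplex (G : SimpleGraph V) : IsComplex (IndComplex G) :=
  fun _ hA _ hBA u hu v hv => hA u (hBA hu) v (hBA hv)

variable [DecidableEq V] {Δ : Set (Finset V)} {F : Finset V}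

theorem IsComplex.linkC (hΔ : IsComplex Δ) (F : Finset V) : IsComplex (linkC Δ F) :=
  fun _ hA _ hBA => ⟨hA.1.mono_left hBA, hΔ _ hA.2 _ (Finset.union_subset_union_left hBA)⟩

theorem IsComplex.exists_pair_mem (hΔ : IsComplex Δ) {A : Finset V} (hA : A ∈ Δ)
    (hcard : 2 ≤ A.card) : ∃ u w, u ≠ w ∧ ({u, w} : Finset V) ∈ Δ := by
  obtain ⟨u, hu, w, hw, hne⟩ := Finset.one_lt_card.1 hcard
  exact ⟨u, w, hne, hΔ A hA _ (Finset.insert_subset hu (Finset.singleton_subset_iff.2 hw))⟩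

theorem linkC_empty (Δ : Set (Finset V)) : linkC Δ ∅ = Δ := by
  ext A
  simp [linkC]

theorem singleton_mem_linkC_indComplex_iff (hF : F ∈ IndComplex G) (z : V) :
    {z} ∈ linkC (IndComplex G) F ↔ z ∉ F ∧ ∀ f ∈ F, ¬ G.Adj z f := by
  simp only [linkC, IndComplex, Set.mem_ofPred_eq, Finset.disjoint_singleton_left,
    Finset.mem_union, Finset.mem_singleton]
  refine and_congr_right fun _ => ⟨fun h f hf => h z (.inl rfl) f (.inr hf), ?_⟩
  rintro h x (rfl | hx) y (rfl | hy)
  exacts [G.irrefl, h _ hy, fun hxy => h _ hx hxy.symm, hF _ hx _ hy]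

theorem pair_mem_linkC_indComplex_iff {u w : V} :
    {u, w} ∈ linkC (IndComplex G) F ↔
      {u} ∈ linkC (IndComplex G) F ∧ {w} ∈ linkC (IndComplex G) F ∧ ¬ G.Adj u w := by
  simp only [linkC, IndComplex, Set.mem_ofPred_eq, Finset.disjoint_insert_left,
    Finset.disjoint_singleton_left, Finset.mem_union, Finset.mem_insert, Finset.mem_singleton]
  constructor
  · rintro ⟨⟨hu, hw⟩, h⟩
    refine ⟨⟨hu, ?_⟩, ⟨hw, ?_⟩, h u (.inl (.inl rfl)) w (.inl (.inr rfl))⟩ <;>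
      rintro x (rfl | hx) y (rfl | hy) <;> grind
  · rintro ⟨⟨hu, hu'⟩, ⟨hw, hw'⟩, huw⟩
    refine ⟨⟨hu, hw⟩, ?_⟩
    rintro x ((rfl | rfl) | hx) y ((rfl | rfl) | hy) <;> grind [SimpleGraph.adj_symm]

theorem isS2_indComplex_of_adj_unique (hG : ∀ v w w', G.Adj v w → G.Adj v w' → w = w') :
    IsS2 (IndComplex G) := by
  intro F _ ⟨A, hA, hcard⟩ u hu w hw
  by_cases huw : u = w
  · exact huw ▸ .refl
  by_cases hadj : G.Adj u w
  swap
  · exact .single ⟨huw, pair_mem_linkC_indComplex_iff.2 ⟨hu, hw, hadj⟩⟩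
  obtain ⟨g₁, g₂, hne, hg⟩ := ((isComplex_indComplex G).linkC F).exists_pair_mem hA hcard
  obtain ⟨hg₁, hg₂, hg⟩ := pair_mem_linkC_indComplex_iff.1 hg
  -- the link edge `{g₁, g₂}` is not `{u, w}`, so it supplies a third link vertex `z`
  obtain ⟨z, hz, hzu, hzw⟩ : ∃ z, {z} ∈ linkC (IndComplex G) F ∧ z ≠ u ∧ z ≠ w := by
    by_contra! h
    have h₁ : g₁ = u ∨ g₁ = w := or_iff_not_imp_left.2 (h g₁ hg₁)
    have h₂ : g₂ = u ∨ g₂ = w := or_iff_not_imp_left.2 (h g₂ hg₂)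
    rcases h₁ with rfl | rfl <;> rcases h₂ with rfl | rfl
    exacts [hne rfl, hg hadj, hg hadj.symm, hne rfl]
  have huz : ¬ G.Adj u z := fun h => hzw (hG _ _ _ h hadj)
  have hzw' : ¬ G.Adj z w := fun h => hzu (hG _ _ _ h.symm hadj.symm)
  exact .head ⟨hzu.symm, pair_mem_linkC_indComplex_iff.2 ⟨hu, hz, huz⟩⟩
    (.single ⟨hzw, pair_mem_linkC_indComplex_iff.2 ⟨hz, hw, hzw'⟩⟩)

end IndependenceComplex

theorem complexConnected_indComplex_of_not_adj_add_one {n : ℕ} [NeZero n]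
    [Nontrivial (ZMod n)] {G : SimpleGraph (ZMod n)} (hG : ∀ v, ¬ G.Adj v (v + 1)) :
    ComplexConnected (IndComplex G) := by
  have step (v : ZMod n) : v ≠ v + 1 ∧ ({v, v + 1} : Finset (ZMod n)) ∈ IndComplex G := by
    refine ⟨by simp, ?_⟩
    simp only [IndComplex, Set.mem_ofPred_eq, Finset.mem_insert, Finset.mem_singleton]
    rintro x (rfl | rfl) y (rfl | rfl)
    exacts [G.irrefl, hG x, fun h => hG y h.symm, G.irrefl]
  have path (u : ZMod n) (m : ℕ) : ReflTransGen
      (fun a b => a ≠ b ∧ ({a, b} : Finset (ZMod n)) ∈ IndComplex G) u (u + m) := by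
    induction m with
    | zero => simpa using .refl
    | succ m ih => simpa [← add_assoc] using ih.tail (step _)
  intro u _ w _
  simpa using path u (w - u).val

section IntegerLink

/-- The vertices of the link of `P` in the independence complex of the graph on `ℤ` in which
`s` and `t` are adjacent iff `d < |s - t|`. -/
def IsIntLinkVertex (P : Finset ℤ) (d : ℕ) (t : ℤ) : Prop :=
  t ∉ P ∧ ∀ q ∈ P, (t - q).natAbs ≤ d

def IntLinkEdge (P : Finset ℤ) (d : ℕ) (s t : ℤ) : Prop :=
  s ≠ t ∧ IsIntLinkVertex P d s ∧ IsIntLinkVertex P d t ∧ (s - t).natAbs ≤ d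

variable {P : Finset ℤ} {d : ℕ} {s t x y : ℤ}

theorem isIntLinkVertex_iff (hP : P.Nonempty) :
    IsIntLinkVertex P d t ↔ t ∉ P ∧ P.max' hP - d ≤ t ∧ t ≤ P.min' hP + d := by
  refine and_congr_right fun _ => ⟨fun h => ?_, fun h q hq => ?_⟩
  · have := h _ (P.min'_mem hP)
    have := h _ (P.max'_mem hP)
    omega
  · have := P.min'_le q hq
    have := P.le_max' q hq
    omega

theorem reflTransGen_intLinkEdge_of_natAbs_le (hs : IsIntLinkVertex P d s)
    (ht : IsIntLinkVertex P d t) (hst : (s - t).natAbs ≤ d) :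
    ReflTransGen (IntLinkEdge P d) s t := by
  rcases eq_or_ne s t with rfl | hne
  · exact .refl
  · exact .single ⟨hne, hs, ht, hst⟩

/-- Two far-apart link vertices are joined either through a point of `[min P, max P]` missing
from `P`, or, when `P` fills that interval, through `min P - 1` and `max P + 1`; these two are
close enough unless they are the only link vertices, which the assumed edge excludes. -/
theorem reflTransGen_intLinkEdge (hP : P.Nonempty) (hedge : ∃ s t, IntLinkEdge P d s t)
    (hx : IsIntLinkVertex P d x) (hy : IsIntLinkVertex P d y) :
    ReflTransGen (IntLinkEdge P d) x y := by
  set a := P.min' hP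
  set b := P.max' hP
  have vertex_iff (t : ℤ) := isIntLinkVertex_iff (d := d) (t := t) hP
  have step {s t : ℤ} := @reflTransGen_intLinkEdge_of_natAbs_le P d s t
  have hx' := (vertex_iff x).1 hx
  have hy' := (vertex_iff y).1 hy
  by_cases hxy : (x - y).natAbs ≤ d
  · exact step hx hy hxy
  by_cases hgap : ∃ t, a ≤ t ∧ t ≤ b ∧ t ∉ P
  · obtain ⟨t, hat, htb, htP⟩ := hgap
    have ht := (vertex_iff t).2 ⟨htP, by omega, by omega⟩
    exact (step hx ht (by omega)).trans (step ht hy (by omega))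
  push Not at hgap
  have outside (t : ℤ) (ht : IsIntLinkVertex P d t) : t < a ∨ b < t := by
    by_contra! h
    exact ht.1 (hgap t h.1 h.2)
  have hxo := outside x hx
  have hyo := outside y hy
  have hab : a ≤ b := P.min'_le_max' hP
  have hband : b - a + 2 ≤ d := by
    obtain ⟨s, t, hst, hs, ht, hdist⟩ := hedge
    have := outside s hs
    have := outside t ht
    have := (vertex_iff s).1 hs
    have := (vertex_iff t).1 ht
    omega
  have notMem (t : ℤ) (ht : t < a ∨ b < t) : t ∉ P := fun h => by
    have := P.min'_le t h
    have := P.le_max' t h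
    omega
  have ha := (vertex_iff (a - 1)).2 ⟨notMem _ (by omega), by omega, by omega⟩
  have hb := (vertex_iff (b + 1)).2 ⟨notMem _ (by omega), by omega, by omega⟩
  rcases hxo with hxa | hbx
  · exact (step hx ha (by omega)).trans ((step ha hb (by omega)).trans (step hb hy (by omega)))
  · exact (step hx hb (by omega)).trans ((step hb ha (by omega)).trans (step ha hy (by omega)))

end IntegerLink

namespace ZMod

variable {n d : ℕ} [NeZero n]

theorem natAbs_valMinAbs_sub (v w : ZMod n) :
    (v - w).valMinAbs.natAbs =
      min ((v.val : ℤ) - w.val).natAbs (n - ((v.val : ℤ) - w.val).natAbs) := by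
  have := v.val_lt
  have := w.val_lt
  rcases le_total w.val v.val with h | h
  · rw [valMinAbs_natAbs_eq_min, val_sub h]
    omega
  · rw [← neg_sub, natAbs_valMinAbs_neg, valMinAbs_natAbs_eq_min, val_sub h]
    omega

theorem natAbs_valMinAbs_intCast_le_iff {m : ℤ} (h : m.natAbs + d < n) :
    (m : ZMod n).valMinAbs.natAbs ≤ d ↔ m.natAbs ≤ d := by
  refine ⟨fun hle => ?_, fun hle => (natAbs_min_of_le_div_two n _ _
    (coe_valMinAbs _) (natAbs_valMinAbs_le _)).trans hle⟩
  have hdvd : (n : ℤ) ∣ (m : ZMod n).valMinAbs - m := by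
    rw [← intCast_zmod_eq_zero_iff_dvd]
    simp
  have := Int.eq_zero_of_dvd_of_natAbs_lt_natAbs hdvd (by omega)
  omega

theorem valMinAbs_intCast_of_natAbs_lt {m : ℤ} (h : 2 * m.natAbs < n) :
    (m : ZMod n).valMinAbs = m :=
  (valMinAbs_spec _ _).2 ⟨rfl, by omega, by omega⟩

end ZMod

section Circulant

variable {n d : ℕ} [NeZero n]

variable (n d) in
abbrev upperCirculant : SimpleGraph (ZMod n) :=
  circulantGraph n (Set.Icc (d + 1) (n / 2))

theorem upperCirculant_adj_iff (v w : ZMod n) :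
    (upperCirculant n d).Adj v w ↔ d < (v - w).valMinAbs.natAbs := by
  have hlt := (v - w).val_lt
  simp only [upperCirculant, circulantGraph, Set.mem_Icc, ZMod.valMinAbs_natAbs_eq_min,
    show w - v = -(v - w) by ring, ZMod.neg_val, ← sub_ne_zero (a := v), ne_eq,
    ← ZMod.val_eq_zero (v - w)]
  split_ifs <;> omega

/-- The coordinates relative to `u₀` differ by at most `2d`, and `n > 3d` leaves no room to
wrap around the cycle. -/
theorem upperCirculant_adj_iff_of_near (h3 : 3 * d < n) {u₀ v w : ZMod n}
    (hv : (v - u₀).valMinAbs.natAbs ≤ d) (hw : (w - u₀).valMinAbs.natAbs ≤ d) :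
    ¬ (upperCirculant n d).Adj v w ↔
      ((v - u₀).valMinAbs - (w - u₀).valMinAbs).natAbs ≤ d := by
  have hsub : v - w = (((v - u₀).valMinAbs - (w - u₀).valMinAbs : ℤ) : ZMod n) := by
    push_cast [ZMod.coe_valMinAbs]
    ring
  rw [upperCirculant_adj_iff, not_lt, hsub, ZMod.natAbs_valMinAbs_intCast_le_iff (by omega)]

theorem upperCirculant_adj_unique (hn : n = 2 * d + 2) {v w w' : ZMod n}
    (h : (upperCirculant n d).Adj v w) (h' : (upperCirculant n d).Adj v w') : w = w' := by
  rw [upperCirculant_adj_iff, ZMod.valMinAbs_natAbs_eq_min] at h h'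
  have hval : (v - w).val = (v - w').val := by omega
  simpa using ZMod.val_injective n hval

theorem graphS2_upperCirculant_of_eq (hn : n = 2 * d + 2) : GraphS2 (upperCirculant n d) :=
  isS2_indComplex_of_adj_unique fun _ _ _ => upperCirculant_adj_unique hn

section LinkCoordinates

variable {F : Finset (ZMod n)} {u₀ : ZMod n}

theorem natAbs_valMinAbs_sub_le_of_not_adj {v : ZMod n} (h : ¬ (upperCirculant n d).Adj v u₀) :
    (v - u₀).valMinAbs.natAbs ≤ d := by
  simpa [upperCirculant_adj_iff] using h

theorem natAbs_valMinAbs_sub_le_of_mem_linkC (hu₀ : u₀ ∈ F) {z : ZMod n}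
    (hz : {z} ∈ linkC (IndComplex (upperCirculant n d)) F) : (z - u₀).valMinAbs.natAbs ≤ d :=
  natAbs_valMinAbs_sub_le_of_not_adj <|
    hz.2 z (by simp) u₀ (Finset.mem_union_right _ hu₀)

theorem isIntLinkVertex_of_mem_linkC (h3 : 3 * d < n)
    (hF : F ∈ IndComplex (upperCirculant n d)) (hu₀ : u₀ ∈ F) {z : ZMod n}
    (hz : {z} ∈ linkC (IndComplex (upperCirculant n d)) F) :
    IsIntLinkVertex (F.image fun v => (v - u₀).valMinAbs) d (z - u₀).valMinAbs := by
  obtain ⟨hzF, hzadj⟩ := (singleton_mem_linkC_indComplex_iff hF z).1 hz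
  refine ⟨fun h => ?_, fun q hq => ?_⟩
  · obtain ⟨f, hf, hfz⟩ := Finset.mem_image.1 h
    have hfz : f = z := by simpa using hfz
    exact hzF (hfz ▸ hf)
  · obtain ⟨f, hf, rfl⟩ := Finset.mem_image.1 hq
    exact (upperCirculant_adj_iff_of_near h3 (natAbs_valMinAbs_sub_le_of_mem_linkC hu₀ hz)
      (natAbs_valMinAbs_sub_le_of_not_adj (hF f hf u₀ hu₀))).1 (hzadj f hf)

theorem mem_linkC_of_isIntLinkVertex (h3 : 3 * d < n)
    (hF : F ∈ IndComplex (upperCirculant n d)) (hu₀ : u₀ ∈ F) {t : ℤ}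
    (ht : IsIntLinkVertex (F.image fun v => (v - u₀).valMinAbs) d t) :
    {u₀ + t} ∈ linkC (IndComplex (upperCirculant n d)) F ∧
      (u₀ + t - u₀).valMinAbs = t := by
  have ht₀ : t.natAbs ≤ d := by simpa using ht.2 _ (Finset.mem_image_of_mem _ hu₀)
  have hcoord : (u₀ + t - u₀).valMinAbs = t := by
    rw [add_sub_cancel_left]
    exact ZMod.valMinAbs_intCast_of_natAbs_lt (by omega)
  refine ⟨(singleton_mem_linkC_indComplex_iff hF _).2 ⟨fun h => ?_, fun f hf => ?_⟩, hcoord⟩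
  · exact ht.1 (hcoord ▸ Finset.mem_image_of_mem _ h)
  · rw [upperCirculant_adj_iff_of_near h3 (by rwa [hcoord])
      (natAbs_valMinAbs_sub_le_of_not_adj (hF f hf u₀ hu₀)), hcoord]
    exact ht.2 _ (Finset.mem_image_of_mem _ hf)

/-- Measuring from `u₀` turns the link of `F` into the integer model `IntLinkEdge`. -/
theorem complexConnected_linkC_upperCirculant (h3 : 3 * d < n)
    (hF : F ∈ IndComplex (upperCirculant n d)) (hu₀ : u₀ ∈ F)
    (hEx : ∃ A ∈ linkC (IndComplex (upperCirculant n d)) F, 2 ≤ A.card) :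
    ComplexConnected (linkC (IndComplex (upperCirculant n d)) F) := by
  set P := F.image fun v => (v - u₀).valMinAbs
  have hvert {z} := isIntLinkVertex_of_mem_linkC h3 hF hu₀ (z := z)
  have hnear {z} := natAbs_valMinAbs_sub_le_of_mem_linkC (d := d) hu₀ (z := z)
  have hedge (s t : ℤ) (hst : IntLinkEdge P d s t) :
      u₀ + s ≠ u₀ + t ∧
        ({u₀ + s, u₀ + t} : Finset (ZMod n)) ∈ linkC (IndComplex (upperCirculant n d)) F := by
    obtain ⟨hne, hs, ht, hdist⟩ := hst
    obtain ⟨hs', hsc⟩ := mem_linkC_of_isIntLinkVertex h3 hF hu₀ hs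
    obtain ⟨ht', htc⟩ := mem_linkC_of_isIntLinkVertex h3 hF hu₀ ht
    refine ⟨fun h => hne (by rw [← hsc, ← htc, h]),
      pair_mem_linkC_indComplex_iff.2 ⟨hs', ht', ?_⟩⟩
    rwa [upperCirculant_adj_iff_of_near h3 (hnear hs') (hnear ht'), hsc, htc]
  have hedge_ex : ∃ s t, IntLinkEdge P d s t := by
    obtain ⟨A, hA, hcard⟩ := hEx
    obtain ⟨g₁, g₂, hne, hg⟩ := ((isComplex_indComplex _).linkC F).exists_pair_mem hA hcard
    obtain ⟨hg₁, hg₂, hadj⟩ := pair_mem_linkC_indComplex_iff.1 hg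
    exact ⟨_, _, fun h => hne (by simpa using h), hvert hg₁, hvert hg₂,
      (upperCirculant_adj_iff_of_near h3 (hnear hg₁) (hnear hg₂)).1 hadj⟩
  intro u hu w hw
  have hpath := reflTransGen_intLinkEdge ⟨_, Finset.mem_image_of_mem _ hu₀⟩ hedge_ex
    (hvert hu) (hvert hw)
  simpa [Function.onFun] using ReflTransGen.lift (r := IntLinkEdge P d)
    (p := fun a b => a ≠ b ∧ ({a, b} : Finset (ZMod n)) ∈
      linkC (IndComplex (upperCirculant n d)) F) (u₀ + ·) hedge _ _ hpath

end LinkCoordinates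

theorem graphS2_upperCirculant_of_three_mul_lt (hd : 1 ≤ d) (h3 : 3 * d < n) :
    GraphS2 (upperCirculant n d) := by
  intro F hF hEx
  rcases F.eq_empty_or_nonempty with rfl | ⟨u₀, hu₀⟩
  · have : Fact (1 < n) := ⟨by omega⟩
    rw [linkC_empty]
    refine complexConnected_indComplex_of_not_adj_add_one fun v => ?_
    rw [upperCirculant_adj_iff, sub_add_cancel_left, ZMod.natAbs_valMinAbs_neg,
      ZMod.valMinAbs_natAbs_eq_min, ZMod.val_one]
    omega
  · exact complexConnected_linkC_upperCirculant h3 hF hu₀ hEx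

variable (n d) in
def gapFace : Finset (ZMod n) :=
  Finset.univ.filter fun v => v.val ≤ 3 * d - n ∨ v.val = d

theorem mem_gapFace {v : ZMod n} : v ∈ gapFace n d ↔ v.val ≤ 3 * d - n ∨ v.val = d := by
  simp [gapFace]

theorem upperCirculant_adj_natCast_iff {m : ℕ} (hm : m < n) (v : ZMod n) :
    (upperCirculant n d).Adj v m ↔
      d < min ((v.val : ℤ) - m).natAbs (n - ((v.val : ℤ) - m).natAbs) := by
  rw [upperCirculant_adj_iff, ZMod.natAbs_valMinAbs_sub, ZMod.val_natCast_of_lt hm]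

theorem gapFace_mem_indComplex (hn : 2 * d ≤ n) :
    gapFace n d ∈ IndComplex (upperCirculant n d) := by
  intro v hv w hw
  rw [mem_gapFace] at hv hw
  rw [upperCirculant_adj_iff, ZMod.natAbs_valMinAbs_sub]
  omega

theorem eq_of_mem_linkC_gapFace (hn : 2 * d + 3 ≤ n) (h3 : n ≤ 3 * d) {a : ZMod n}
    (ha : {a} ∈ linkC (IndComplex (upperCirculant n d)) (gapFace n d))
    (haw : ¬ (upperCirculant n d).Adj a (2 * d : ℕ)) : a = (2 * d : ℕ) := by
  obtain ⟨haF, hadj⟩ :=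
    (singleton_mem_linkC_indComplex_iff (gapFace_mem_indComplex (by omega)) a).1 ha
  have not_adj (m : ℕ) (hm : m ≤ 3 * d - n ∨ m = d) :
      ¬ (upperCirculant n d).Adj a m :=
    hadj m (mem_gapFace.2 (by rwa [ZMod.val_natCast_of_lt (by omega)]))
  have ha_lt := a.val_lt
  rw [mem_gapFace] at haF
  rw [upperCirculant_adj_natCast_iff (by omega)] at haw
  have h₀ := not_adj 0 (by omega)
  have h_d := not_adj d (by omega)
  rw [upperCirculant_adj_natCast_iff (by omega)] at h₀ h_d
  apply ZMod.val_injective n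
  rw [ZMod.val_natCast_of_lt (by omega)]
  by_contra hne
  -- `a` lies in `[2d - k, 2d - 1]` for `k = 3d - n`, and then it is too far from `a + k + 1 - 2d`
  have hj := not_adj (a.val + (3 * d - n) + 1 - 2 * d) (by omega)
  rw [upperCirculant_adj_natCast_iff (by omega)] at hj
  omega

theorem not_graphS2_upperCirculant (hn : 2 * d + 3 ≤ n) (h3 : n ≤ 3 * d) :
    ¬ GraphS2 (upperCirculant n d) := by
  intro hS2
  have hF := gapFace_mem_indComplex (n := n) (d := d) (by omega)
  have hval (m : ℕ) (hm : m < n) : (m : ZMod n).val = m := ZMod.val_natCast_of_lt hm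
  have cast_ne {m m' : ℕ} (hm : m < n) (hm' : m' < n) (h : m ≠ m') : (m : ZMod n) ≠ m' :=
    fun he => h (by rw [← hval m hm, ← hval m' hm', he])
  have vertex (m : ℕ) (hm : 3 * d - n < m ∧ m < d ∨ m = 2 * d) :
      {(m : ZMod n)} ∈ linkC (IndComplex (upperCirculant n d)) (gapFace n d) := by
    refine (singleton_mem_linkC_indComplex_iff hF _).2 ⟨?_, fun f hf => ?_⟩
    · rw [mem_gapFace, hval m (by omega)]
      omega
    · rw [mem_gapFace] at hf
      rw [upperCirculant_adj_iff, ZMod.natAbs_valMinAbs_sub, hval m (by omega)]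
      omega
  set k := 3 * d - n with hk
  have hpair : ({((k + 1 : ℕ) : ZMod n), ((k + 2 : ℕ) : ZMod n)} : Finset (ZMod n)) ∈
      linkC (IndComplex (upperCirculant n d)) (gapFace n d) := by
    refine pair_mem_linkC_indComplex_iff.2 ⟨vertex _ (by omega), vertex _ (by omega), ?_⟩
    rw [upperCirculant_adj_natCast_iff (by omega), hval _ (by omega)]
    omega
  have hcard := (Finset.card_pair (cast_ne (by omega) (by omega) (by omega : k + 1 ≠ k + 2))).ge
  rcases (hS2 _ hF ⟨_, hpair, hcard⟩ _ (vertex (k + 1) (by omega)) _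
    (vertex (2 * d) (by omega))).cases_tail with h | ⟨a, -, hne, ha⟩
  · exact cast_ne (by omega) (by omega) (by omega : 2 * d ≠ k + 1) h
  · obtain ⟨ha, -, haw⟩ := pair_mem_linkC_indComplex_iff.1 ha
    exact hne (eq_of_mem_linkC_gapFace hn h3 ha haw)

end Circulant

/-- Let `n ≥ 2d+2` and `d ≥ 1`. The circulant graph `C_n(d+1, d+2, …, ⌊n/2⌋)` is `S₂`
iff `n > 3d` or `n = 2d+2`. -/
theorem circulant_upper_S2_iff (n d : ℕ) (hd : 1 ≤ d) (hn : 2 * d + 2 ≤ n) :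
    GraphS2 (circulantGraph n (Set.Icc (d + 1) (n / 2))) ↔ 3 * d < n ∨ n = 2 * d + 2 := by
  have : NeZero n := ⟨by omega⟩
  refine ⟨fun hS2 => ?_, ?_⟩
  · by_contra! h
    exact not_graphS2_upperCirculant (by omega) h.1 hS2
  · rintro (h | h)
    exacts [graphS2_upperCirculant_of_three_mul_lt hd h, graphS2_upperCirculant_of_eq h]
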